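/- Let K be an imaginary quadratic number field. For every group homomorphism ψ : Cl(K) → {±1} and all nonzero ideals I and J of 𝓞_K with N(I) = N(J), one has ψ([I]) = ψ([J]). (Consequently, for each such ψ the quantity b(n, ψ) := ψ([I]) for any nonzero ideal I with N(I) = n, and b(n, ψ) := 0 if no such ideal exists, is well defined.) -/
import Mathlib

set_option maxHeartbeats 1000000
set_option synthInstance.maxHeartbeats 200000

open Filter Asymptotics NumberField
open scoped nonZeroDivisors Classical

section Aux

variable {K : Type} [Field K] [NumberField K]

/-- Package a nonzero ideal as an element of the nonzero divisors. -/
private def nzIdeal (A : Ideal (𝓞 K)) (h : A ≠ ⊥) : (Ideal (𝓞 K))⁰ :=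
  ⟨A, mem_nonZeroDivisors_of_ne_zero (by rwa [Ideal.zero_eq_bot])⟩

private lemma natPrime_mem_of_dvd_absNorm {P : Ideal (𝓞 K)} (hP : P.IsPrime) (hP0 : P ≠ ⊥)
    {p : ℕ} (hp : p.Prime) (hdvd : p ∣ Ideal.absNorm P) : (p : 𝓞 K) ∈ P := by
  have hmax : P.IsMaximal := hP.isMaximal hP0
  letI : Field ((𝓞 K) ⧸ P) := Ideal.Quotient.field P
  have hcard : Nat.card ((𝓞 K) ⧸ P) = Ideal.absNorm P := by
    rw [Ideal.absNorm_apply, Submodule.cardQuot_apply]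
  have hne : Ideal.absNorm P ≠ 0 := by
    rw [Ne, Ideal.absNorm_eq_zero_iff]; exact hP0
  have hfin : Finite ((𝓞 K) ⧸ P) := Nat.finite_of_card_ne_zero (by rw [hcard]; exact hne)
  letI : Fintype ((𝓞 K) ⧸ P) := Fintype.ofFinite _
  obtain ⟨n, hq, hcard'⟩ := FiniteField.card ((𝓞 K) ⧸ P) (ringChar ((𝓞 K) ⧸ P))
  have hpq : p = ringChar ((𝓞 K) ⧸ P) := by
    have hdvd' : p ∣ ringChar ((𝓞 K) ⧸ P) ^ (n : ℕ) := by
      rw [← hcard', ← Nat.card_eq_fintype_card, hcard]; exact hdvd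
    exact (Nat.prime_dvd_prime_iff_eq hp hq).mp (hp.dvd_of_dvd_pow hdvd')
  have hz : ((p : ℕ) : (𝓞 K) ⧸ P) = 0 := by rw [hpq]; exact ringChar.Nat.cast_ringChar
  rwa [← map_natCast (Ideal.Quotient.mk P), Ideal.Quotient.eq_zero_iff_mem] at hz

private lemma absNorm_span_natCast (hdeg : Module.finrank ℚ K = 2) (p : ℕ) :
    Ideal.absNorm (Ideal.span {(p : 𝓞 K)}) = p ^ 2 := by
  have h : (p : 𝓞 K) = algebraMap ℤ (𝓞 K) (p : ℤ) := by simp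
  have hcard : Fintype.card (Module.Free.ChooseBasisIndex ℤ (𝓞 K)) = 2 := by
    rw [← Module.finrank_eq_card_chooseBasisIndex, RingOfIntegers.rank, hdeg]
  rw [Ideal.absNorm_span_singleton, h,
    Algebra.norm_algebraMap_of_basis (Module.Free.chooseBasis ℤ (𝓞 K)), hcard]
  simp [Int.natAbs_pow]

private lemma eq_of_dvd_of_absNorm_eq {A B : Ideal (𝓞 K)} (hA : A ≠ ⊥) (hdvd : A ∣ B)
    (h : Ideal.absNorm A = Ideal.absNorm B) : A = B := by
  obtain ⟨C, rfl⟩ := hdvd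
  have hA' : Ideal.absNorm A ≠ 0 := by rwa [Ne, Ideal.absNorm_eq_zero_iff]
  have hN : Ideal.absNorm A * Ideal.absNorm C = Ideal.absNorm A * 1 := by
    rw [mul_one, ← map_mul, ← h]
  have hC : Ideal.absNorm C = 1 := Nat.eq_of_mul_eq_mul_left (Nat.pos_of_ne_zero hA') hN
  rw [Ideal.absNorm_eq_one_iff] at hC
  rw [hC, Ideal.mul_top]

/-- Any two nonzero prime ideals lying over the same rational prime have the same norm and the
same value under any quadratic character of the class group. -/
private lemma prime_over_same (hdeg : Module.finrank ℚ K = 2) (ψ : ClassGroup (𝓞 K) →* ℤˣ)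
    {p : ℕ} (hp : p.Prime) {P Q : Ideal (𝓞 K)} (hP : P.IsPrime) (hP0 : P ≠ ⊥)
    (hQ : Q.IsPrime) (hQ0 : Q ≠ ⊥) (hpP : (p : 𝓞 K) ∈ P) (hpQ : (p : 𝓞 K) ∈ Q) :
    Ideal.absNorm P = Ideal.absNorm Q ∧
      ψ (ClassGroup.mk0 (nzIdeal P hP0)) = ψ (ClassGroup.mk0 (nzIdeal Q hQ0)) := by
  set pR : Ideal (𝓞 K) := Ideal.span {(p : 𝓞 K)} with hpRdef
  have hp0 : (p : 𝓞 K) ≠ 0 := Nat.cast_ne_zero.mpr hp.ne_zero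
  have hpR0 : pR ≠ ⊥ := by
    rw [hpRdef, Ne, Ideal.span_singleton_eq_bot]; exact hp0
  have hNpR : Ideal.absNorm pR = p ^ 2 := absNorm_span_natCast hdeg p
  have hPd : P ∣ pR := Ideal.dvd_iff_le.mpr ((Ideal.span_singleton_le_iff_mem _).mpr hpP)
  have hQd : Q ∣ pR := Ideal.dvd_iff_le.mpr ((Ideal.span_singleton_le_iff_mem _).mpr hpQ)
  have hPprime : Prime P := Ideal.prime_of_isPrime hP0 hP
  have hQprime : Prime Q := Ideal.prime_of_isPrime hQ0 hQ
  have hNP2 : Ideal.absNorm P ∣ p ^ 2 := by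
    rw [← hNpR]; exact Ideal.absNorm_dvd_absNorm_of_le (Ideal.dvd_iff_le.mp hPd)
  have hNQ2 : Ideal.absNorm Q ∣ p ^ 2 := by
    rw [← hNpR]; exact Ideal.absNorm_dvd_absNorm_of_le (Ideal.dvd_iff_le.mp hQd)
  obtain ⟨k, hk2, hNP⟩ := (Nat.dvd_prime_pow hp).mp hNP2
  obtain ⟨l, hl2, hNQ⟩ := (Nat.dvd_prime_pow hp).mp hNQ2
  have hNP1 : Ideal.absNorm P ≠ 1 := by
    rw [Ne, Ideal.absNorm_eq_one_iff]; exact hP.ne_top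
  have hNQ1 : Ideal.absNorm Q ≠ 1 := by
    rw [Ne, Ideal.absNorm_eq_one_iff]; exact hQ.ne_top
  have hk0 : k ≠ 0 := by rintro rfl; rw [pow_zero] at hNP; exact hNP1 hNP
  have hl0 : l ≠ 0 := by rintro rfl; rw [pow_zero] at hNQ; exact hNQ1 hNQ
  have key : ∀ (A : Ideal (𝓞 K)), A ≠ ⊥ → A ∣ pR →
      Ideal.absNorm A = p ^ 2 → A = pR := by
    intro A hA0 hAd hNA
    exact eq_of_dvd_of_absNorm_eq hA0 hAd (by rw [hNA, hNpR])
  have hk12 : k = 1 ∨ k = 2 := by omega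
  have hl12 : l = 1 ∨ l = 2 := by omega
  rcases hk12 with rfl | rfl <;> rcases hl12 with rfl | rfl
  · -- both norms p
    refine ⟨by rw [hNP, hNQ], ?_⟩
    by_cases hPQ : P = Q
    · subst hPQ; rfl
    · have hPQeq : P * Q = pR := by
        obtain ⟨m, hm⟩ := hPd
        have hQm : Q ∣ m := by
          rcases (hQprime.dvd_mul).mp (hm ▸ hQd) with h | h
          · exact absurd (associated_iff_eq.mp (hQprime.associated_of_dvd hPprime h)).symm hPQ
          · exact h
        obtain ⟨m', hm'⟩ := hQm
        have hfact : pR = P * Q * m' := by rw [hm, hm', mul_assoc]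
        have h1 : p ^ 2 = p * p * Ideal.absNorm m' := by
          rw [← hNpR, hfact, map_mul, map_mul, hNP, hNQ, pow_one]
        have hm'N : Ideal.absNorm m' = 1 := by
          have hpp : 0 < p * p := Nat.mul_pos hp.pos hp.pos
          apply Nat.eq_of_mul_eq_mul_left hpp
          rw [mul_one, ← h1, pow_two]
        rw [Ideal.absNorm_eq_one_iff] at hm'N
        rw [hfact, hm'N, Ideal.mul_top]
      have hprinc : ClassGroup.mk0 (nzIdeal pR hpR0) = 1 := by
        rw [ClassGroup.mk0_eq_one_iff]
        exact ⟨⟨(p : 𝓞 K), rfl⟩⟩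
      have hmul : nzIdeal P hP0 * nzIdeal Q hQ0 = nzIdeal pR hpR0 := Subtype.ext hPQeq
      have h1 : ψ (ClassGroup.mk0 (nzIdeal P hP0)) * ψ (ClassGroup.mk0 (nzIdeal Q hQ0)) = 1 := by
        rw [← map_mul, ← map_mul, hmul, hprinc, map_one]
      have h2 : ψ (ClassGroup.mk0 (nzIdeal P hP0)) * ψ (ClassGroup.mk0 (nzIdeal P hP0)) = 1 :=
        Int.units_mul_self _
      exact mul_left_cancel (h2.trans h1.symm)
  · -- N P = p, N Q = p² : impossible
    exfalso
    have hQeq : Q = pR := key Q hQ0 hQd (by rw [hNQ])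
    have hPQ : P = Q :=
      associated_iff_eq.mp (hPprime.associated_of_dvd hQprime (hQeq ▸ hPd))
    have h12 : p ^ 1 = p ^ 2 := by rw [← hNP, hPQ, hNQ]
    have := Nat.pow_right_injective hp.two_le h12
    omega
  · -- N P = p², N Q = p : impossible
    exfalso
    have hPeq : P = pR := key P hP0 hPd (by rw [hNP])
    have hPQ : Q = P :=
      associated_iff_eq.mp (hQprime.associated_of_dvd hPprime (hPeq ▸ hQd))
    have h12 : p ^ 1 = p ^ 2 := by rw [← hNQ, hPQ, hNP]
    have := Nat.pow_right_injective hp.two_le h12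
    omega
  · -- both p²
    have hPeq : P = pR := key P hP0 hPd (by rw [hNP])
    have hQeq : Q = pR := key Q hQ0 hQd (by rw [hNQ])
    have e1 : nzIdeal P hP0 = nzIdeal pR hpR0 := Subtype.ext hPeq
    have e2 : nzIdeal Q hQ0 = nzIdeal pR hpR0 := Subtype.ext hQeq
    exact ⟨by rw [hNP, hNQ], by rw [e1, e2]⟩

private lemma exists_prime_factor {I : Ideal (𝓞 K)} (hI : I ≠ ⊥) {p : ℕ} (hp : p.Prime)
    (hdvd : p ∣ Ideal.absNorm I) :
    ∃ P : Ideal (𝓞 K), P.IsPrime ∧ P ≠ ⊥ ∧ P ∣ I ∧ (p : 𝓞 K) ∈ P := by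
  have h0 : I ≠ 0 := by rwa [Ne, Ideal.zero_eq_bot]
  have heq : (UniqueFactorizationMonoid.normalizedFactors I).prod = I :=
    associated_iff_eq.mp (UniqueFactorizationMonoid.prod_normalizedFactors h0)
  have hN : p ∣ ((UniqueFactorizationMonoid.normalizedFactors I).map Ideal.absNorm).prod := by
    rw [← map_multiset_prod, heq]; exact hdvd
  obtain ⟨a, ha, hpa⟩ := hp.prime.exists_mem_multiset_dvd hN
  obtain ⟨P, hPmem, rfl⟩ := Multiset.mem_map.mp ha
  have hPprime : Prime P := UniqueFactorizationMonoid.prime_of_normalized_factor P hPmem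
  have hP0 : P ≠ ⊥ := by rw [← Ideal.zero_eq_bot]; exact hPprime.ne_zero
  have hPisP : P.IsPrime := Ideal.isPrime_of_prime hPprime
  exact ⟨P, hPisP, hP0, UniqueFactorizationMonoid.dvd_of_mem_normalizedFactors hPmem,
    natPrime_mem_of_dvd_absNorm hPisP hP0 hp hpa⟩

private lemma main_aux (hdeg : Module.finrank ℚ K = 2) (ψ : ClassGroup (𝓞 K) →* ℤˣ) :
    ∀ n : ℕ, ∀ (I J : Ideal (𝓞 K)) (hI : I ≠ ⊥) (hJ : J ≠ ⊥),
      Ideal.absNorm I = n → Ideal.absNorm J = n →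
      ψ (ClassGroup.mk0 (nzIdeal I hI)) = ψ (ClassGroup.mk0 (nzIdeal J hJ)) := by
  intro n
  induction n using Nat.strong_induction_on with
  | _ n ih =>
    intro I J hI hJ hNI hNJ
    have hn0 : n ≠ 0 := by
      rintro rfl
      rw [Ideal.absNorm_eq_zero_iff] at hNI
      exact hI hNI
    by_cases hn1 : n = 1
    · subst hn1
      rw [Ideal.absNorm_eq_one_iff] at hNI hNJ
      subst hNI; subst hNJ
      rfl
    · set p := n.minFac with hpdef
      have hp : p.Prime := Nat.minFac_prime hn1
      have hpn : p ∣ n := Nat.minFac_dvd n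
      obtain ⟨P, hPisP, hP0, hPd, hpP⟩ := exists_prime_factor hI hp (hNI ▸ hpn)
      obtain ⟨Q, hQisP, hQ0, hQd, hpQ⟩ := exists_prime_factor hJ hp (hNJ ▸ hpn)
      obtain ⟨hNPQ, hψPQ⟩ := prime_over_same hdeg ψ hp hPisP hP0 hQisP hQ0 hpP hpQ
      obtain ⟨I', hI'eq⟩ := hPd
      obtain ⟨J', hJ'eq⟩ := hQd
      have hI'0 : I' ≠ ⊥ := by
        rintro rfl
        rw [hI'eq] at hI
        simp [Ideal.mul_bot] at hI
      have hJ'0 : J' ≠ ⊥ := by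
        rintro rfl
        rw [hJ'eq] at hJ
        simp [Ideal.mul_bot] at hJ
      have hNP0 : Ideal.absNorm P ≠ 0 := by rw [Ne, Ideal.absNorm_eq_zero_iff]; exact hP0
      have hNP1 : Ideal.absNorm P ≠ 1 := by
        rw [Ne, Ideal.absNorm_eq_one_iff]; exact hPisP.ne_top
      have hmulI : Ideal.absNorm P * Ideal.absNorm I' = n := by
        rw [← map_mul, ← hI'eq, hNI]
      have hmulJ : Ideal.absNorm P * Ideal.absNorm J' = n := by
        rw [hNPQ, ← map_mul, ← hJ'eq, hNJ]
      have hNI'J' : Ideal.absNorm I' = Ideal.absNorm J' :=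
        Nat.eq_of_mul_eq_mul_left (Nat.pos_of_ne_zero hNP0) (hmulI.trans hmulJ.symm)
      have hlt : Ideal.absNorm I' < n := by
        have hI'pos : 0 < Ideal.absNorm I' := by
          rw [Nat.pos_iff_ne_zero, Ne, Ideal.absNorm_eq_zero_iff]; exact hI'0
        calc Ideal.absNorm I' = 1 * Ideal.absNorm I' := (one_mul _).symm
          _ < Ideal.absNorm P * Ideal.absNorm I' :=
              Nat.mul_lt_mul_of_lt_of_le (by omega) le_rfl hI'pos
          _ = n := hmulI
      have hIH := ih _ hlt I' J' hI'0 hJ'0 rfl hNI'J'.symm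
      have hfI : nzIdeal I hI = nzIdeal P hP0 * nzIdeal I' hI'0 := Subtype.ext hI'eq
      have hfJ : nzIdeal J hJ = nzIdeal Q hQ0 * nzIdeal J' hJ'0 := Subtype.ext hJ'eq
      rw [hfI, hfJ, map_mul, map_mul, map_mul, map_mul, hψPQ, hIH]

end Aux

theorem genus_char_norm_well_defined (K : Type) [Field K] [NumberField K]
    (hdeg : Module.finrank ℚ K = 2) (hD : discr K < 0)
    (ψ : ClassGroup (𝓞 K) →* ℤˣ) (I J : (Ideal (𝓞 K))⁰)
    (hIJ : Ideal.absNorm (I : Ideal (𝓞 K)) = Ideal.absNorm (J : Ideal (𝓞 K))) :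
    ψ (ClassGroup.mk0 I) = ψ (ClassGroup.mk0 J) := by
  have hI : (I : Ideal (𝓞 K)) ≠ ⊥ := by
    rw [← Ideal.zero_eq_bot]
    exact nonZeroDivisors.coe_ne_zero I
  have hJ : (J : Ideal (𝓞 K)) ≠ ⊥ := by
    rw [← Ideal.zero_eq_bot]
    exact nonZeroDivisors.coe_ne_zero J
  have h := main_aux hdeg ψ (Ideal.absNorm (I : Ideal (𝓞 K))) I J hI hJ rfl hIJ.symm
  have hI' : nzIdeal (↑I) hI = I := Subtype.ext rfl
  have hJ' : nzIdeal (↑J) hJ = J := Subtype.ext rfl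
  rwa [hI', hJ'] at h
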